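/- arXiv:2008.09032 — 2 statements merged into one kernel-verified Lean document; each statement's English description precedes it below -/
import Mathlib

section
/- Let b ∈ ℝ^m, λ ≥ 0 and μ > 0, and let (X^k)_{k≥0} be a DCA sequence for these data. Then for every k ≥ 1, ‖X^k‖_1 ≤ ‖b‖_2²/(2μ); in particular the sequence (X^k) is bounded. -/
open Matrix BigOperators
open scoped ComplexOrder

noncomputable section

/-- The measurement map 𝒜(X) = (aᵢ* X aᵢ)ᵢ (real part; real for Hermitian X). -/
def calA {d m : ℕ} (a : Fin m → Fin d → ℂ) (X : Matrix (Fin d) (Fin d) ℂ) : Fin m → ℝ :=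
  fun i => (star (a i) ⬝ᵥ X.mulVec (a i)).re

/-- ℓ2 norm of a real vector. -/
def l2 {m : ℕ} (v : Fin m → ℝ) : ℝ := Real.sqrt (∑ i, (v i) ^ 2)

/-- Entrywise ℓ1 norm of a complex matrix. -/
def matL1 {d : ℕ} (X : Matrix (Fin d) (Fin d) ℂ) : ℝ := ∑ i, ∑ j, ‖X i j‖

/-- Frobenius norm of a complex matrix. -/
def frob {d : ℕ} (X : Matrix (Fin d) (Fin d) ℂ) : ℝ :=
  Real.sqrt (∑ i, ∑ j, ‖X i j‖ ^ 2)

/-- ℓ1 norm of a complex vector. -/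
def vecL1 {d : ℕ} (x : Fin d → ℂ) : ℝ := ∑ j, ‖x j‖

/-- ℓ2 norm of a complex vector. -/
def vecL2 {d : ℕ} (x : Fin d → ℂ) : ℝ := Real.sqrt (∑ j, ‖x j‖ ^ 2)

/-- Number of nonzero entries of a complex vector. -/
def vecL0 {d : ℕ} (x : Fin d → ℂ) : ℕ := (Finset.univ.filter fun j => x j ≠ 0).card

/-- Y-update of DCA: Y = X/‖X‖_F if X ≠ 0, else 0. -/
def dcaY {d : ℕ} (X : Matrix (Fin d) (Fin d) ℂ) : Matrix (Fin d) (Fin d) ℂ :=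
  if X = 0 then 0 else (frob X : ℂ)⁻¹ • X

/-- The convex objective minimized at each DCA iteration. -/
def dcaObj {d m : ℕ} (a : Fin m → Fin d → ℂ) (b : Fin m → ℝ) (lam mu : ℝ)
    (Y Z : Matrix (Fin d) (Fin d) ℂ) : ℝ :=
  (1/2) * (l2 (fun i => calA a Z i - b i)) ^ 2 + lam * (Z.trace).re
    - lam * ((Yᴴ * Z).trace).re + mu * matL1 Z

/-- A DCA sequence: X⁰ = 0, all iterates Hermitian PSD, and each X^{k+1} globally
    minimizes the convex subproblem over the PSD cone. -/
def IsDCASeq {d m : ℕ} (a : Fin m → Fin d → ℂ) (b : Fin m → ℝ) (lam mu : ℝ)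
    (X : ℕ → Matrix (Fin d) (Fin d) ℂ) : Prop :=
  X 0 = 0 ∧ (∀ k, (X k).PosSemidef) ∧
  ∀ k, ∀ Z : Matrix (Fin d) (Fin d) ℂ, Z.PosSemidef →
    dcaObj a b lam mu (dcaY (X k)) (X (k + 1)) ≤ dcaObj a b lam mu (dcaY (X k)) Z

/-!
Compare the iterate `X^{k+1}` with the feasible point `0`, whose objective value is `‖b‖₂² / 2`.
The linearized penalty `λ (Tr Z - Re ⟨Z, Y^k⟩)` is nonnegative on the PSD cone: `‖Y^k‖_F ≤ 1`,
so by Cauchy–Schwarz `Re ⟨Z, Y^k⟩ ≤ ‖Z‖_F`, and `‖Z‖_F ≤ Tr Z` because every entry of a PSD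
matrix satisfies `|Z i j|² ≤ Z i i * Z j j`. Hence `μ ‖X^{k+1}‖₁ ≤ ‖b‖₂² / 2`, and boundedness
follows from `‖·‖_F ≤ ‖·‖₁`.
-/

namespace Matrix.PosSemidef

variable {n : Type*} {A : Matrix n n ℂ}

lemma re_apply_self_nonneg (hA : A.PosSemidef) (i : n) : 0 ≤ (A i i).re :=
  (Complex.nonneg_iff.mp hA.diag_nonneg).1

lemma im_apply_self (hA : A.PosSemidef) (i : n) : (A i i).im = 0 :=
  (Complex.nonneg_iff.mp hA.diag_nonneg).2.symm

/-- Nonnegativity of the 2 × 2 principal minor on `{i, j}`. -/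
lemma norm_apply_sq_le (hA : A.PosSemidef) (i j : n) :
    ‖A i j‖ ^ 2 ≤ (A i i).re * (A j j).re := by
  have hdet := (hA.submatrix ![i, j]).det_nonneg
  rw [det_fin_two, Complex.nonneg_iff] at hdet
  simp only [submatrix_apply, cons_val_zero, cons_val_one, ← hA.1.apply j i, Complex.sub_re,
    Complex.mul_re, Complex.star_def, Complex.conj_re, Complex.conj_im, hA.im_apply_self] at hdet
  rw [Complex.sq_norm, Complex.normSq_apply]
  nlinarith [hdet.1]

end Matrix.PosSemidef

section Norms

variable {d : ℕ}

@[simp] lemma frob_zero : frob (0 : Matrix (Fin d) (Fin d) ℂ) = 0 := by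
  simp [frob]

lemma frob_nonneg (A : Matrix (Fin d) (Fin d) ℂ) : 0 ≤ frob A :=
  Real.sqrt_nonneg _

lemma frob_smul (c : ℂ) (A : Matrix (Fin d) (Fin d) ℂ) : frob (c • A) = ‖c‖ * frob A := by
  simp only [frob, Matrix.smul_apply, smul_eq_mul, norm_mul, mul_pow, ← Finset.mul_sum]
  rw [Real.sqrt_mul (sq_nonneg _), Real.sqrt_sq (norm_nonneg _)]

lemma frob_le_matL1 (A : Matrix (Fin d) (Fin d) ℂ) : frob A ≤ matL1 A := by
  refine Real.sqrt_le_iff.mpr ⟨Finset.sum_nonneg fun i _ => Finset.sum_nonneg fun j _ =>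
    norm_nonneg _, ?_⟩
  calc ∑ i, ∑ j, ‖A i j‖ ^ 2 ≤ ∑ i, (∑ j, ‖A i j‖) ^ 2 :=
        Finset.sum_le_sum fun i _ => Finset.sum_sq_le_sq_sum_of_nonneg fun j _ => norm_nonneg _
    _ ≤ matL1 A ^ 2 := Finset.sum_sq_le_sq_sum_of_nonneg fun i _ =>
        Finset.sum_nonneg fun j _ => norm_nonneg _

lemma re_trace_eq_sum (A : Matrix (Fin d) (Fin d) ℂ) : A.trace.re = ∑ i, (A i i).re := by
  simp [trace, Complex.re_sum]

lemma frob_le_re_trace {A : Matrix (Fin d) (Fin d) ℂ} (hA : A.PosSemidef) :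
    frob A ≤ A.trace.re := by
  rw [re_trace_eq_sum]
  refine Real.sqrt_le_iff.mpr ⟨Finset.sum_nonneg fun i _ => hA.re_apply_self_nonneg i, ?_⟩
  rw [sq, Finset.sum_mul_sum]
  exact Finset.sum_le_sum fun i _ => Finset.sum_le_sum fun j _ => hA.norm_apply_sq_le i j

lemma re_trace_conjTranspose_mul_le (W Z : Matrix (Fin d) (Fin d) ℂ) :
    (Wᴴ * Z).trace.re ≤ frob W * frob Z := by
  calc (Wᴴ * Z).trace.re = ∑ i, ∑ j, (star (W j i) * Z j i).re := by
        simp [trace, mul_apply, Complex.re_sum]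
    _ ≤ ∑ i, ∑ j, ‖W j i‖ * ‖Z j i‖ := Finset.sum_le_sum fun i _ => Finset.sum_le_sum
        fun j _ => (Complex.re_le_norm _).trans_eq (by rw [norm_mul, norm_star])
    _ = ∑ p : Fin d × Fin d, ‖W p.1 p.2‖ * ‖Z p.1 p.2‖ := by
        rw [Finset.sum_comm, Fintype.sum_prod_type]
    _ ≤ √(∑ p : Fin d × Fin d, ‖W p.1 p.2‖ ^ 2) * √(∑ p : Fin d × Fin d, ‖Z p.1 p.2‖ ^ 2) :=
        Real.sum_mul_le_sqrt_mul_sqrt _ _ _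
    _ = frob W * frob Z := by simp only [frob, Fintype.sum_prod_type]

lemma frob_dcaY_le_one (A : Matrix (Fin d) (Fin d) ℂ) : frob (dcaY A) ≤ 1 := by
  unfold dcaY
  split_ifs
  · simp
  · rw [frob_smul, norm_inv, Complex.norm_real, Real.norm_of_nonneg (frob_nonneg A)]
    exact inv_mul_le_one_of_le₀ le_rfl (frob_nonneg A)

lemma re_trace_dcaY_mul_le_re_trace (A : Matrix (Fin d) (Fin d) ℂ)
    {Z : Matrix (Fin d) (Fin d) ℂ} (hZ : Z.PosSemidef) :
    ((dcaY A)ᴴ * Z).trace.re ≤ Z.trace.re :=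
  calc ((dcaY A)ᴴ * Z).trace.re ≤ frob (dcaY A) * frob Z := re_trace_conjTranspose_mul_le _ _
    _ ≤ frob Z := mul_le_of_le_one_left (frob_nonneg Z) (frob_dcaY_le_one A)
    _ ≤ Z.trace.re := frob_le_re_trace hZ

end Norms

section DCA

variable {d m : ℕ} {a : Fin m → Fin d → ℂ} {b : Fin m → ℝ} {lam mu : ℝ}

lemma dcaObj_zero (Y : Matrix (Fin d) (Fin d) ℂ) : dcaObj a b lam mu Y 0 = l2 b ^ 2 / 2 := by
  simp only [dcaObj, l2, calA, matL1, zero_mulVec, dotProduct_zero, Complex.zero_re, zero_sub,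
    even_two, Even.neg_pow, trace_zero, mul_zero, add_zero, sub_zero, Matrix.zero_apply, norm_zero,
    Finset.sum_const_zero]
  ring

lemma mul_matL1_le_dcaObj (hlam : 0 ≤ lam) (A : Matrix (Fin d) (Fin d) ℂ)
    {Z : Matrix (Fin d) (Fin d) ℂ} (hZ : Z.PosSemidef) :
    mu * matL1 Z ≤ dcaObj a b lam mu (dcaY A) Z := by
  have hpen := mul_le_mul_of_nonneg_left (re_trace_dcaY_mul_le_re_trace A hZ) hlam
  have hfit : 0 ≤ 1 / 2 * l2 (fun i => calA a Z i - b i) ^ 2 := by positivity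
  unfold dcaObj
  linarith

lemma IsDCASeq.matL1_succ_le {X : ℕ → Matrix (Fin d) (Fin d) ℂ} (hX : IsDCASeq a b lam mu X)
    (hlam : 0 ≤ lam) (hmu : 0 < mu) (k : ℕ) :
    matL1 (X (k + 1)) ≤ l2 b ^ 2 / (2 * mu) := by
  obtain ⟨-, hpsd, hmin⟩ := hX
  have h := (mul_matL1_le_dcaObj hlam (X k) (hpsd (k + 1))).trans
    ((hmin k 0 PosSemidef.zero).trans_eq (dcaObj_zero _))
  rw [le_div_iff₀ (by positivity)]
  linarith

end DCA

/-- Boundedness of the DCA sequence: ‖Xᵏ‖₁ ≤ ‖b‖₂²/(2μ) for k ≥ 1. -/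
theorem dca_sequence_bounded {d m : ℕ} (a : Fin m → Fin d → ℂ) (b : Fin m → ℝ)
    (lam mu : ℝ) (hlam : 0 ≤ lam) (hmu : 0 < mu)
    (X : ℕ → Matrix (Fin d) (Fin d) ℂ) (hX : IsDCASeq a b lam mu X) :
    (∀ k : ℕ, 1 ≤ k → matL1 (X k) ≤ (l2 b) ^ 2 / (2 * mu)) ∧
    ∃ R : ℝ, ∀ k : ℕ, frob (X k) ≤ R := by
  refine ⟨fun k hk => ?_, l2 b ^ 2 / (2 * mu), fun k => ?_⟩
  · obtain ⟨k, rfl⟩ := Nat.exists_eq_add_of_le' hk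
    exact hX.matL1_succ_le hlam hmu k
  · cases k with
    | zero => rw [hX.1, frob_zero]; positivity
    | succ k => exact (frob_le_matL1 _).trans (hX.matL1_succ_le hlam hmu k)
end
end

section
/- Let x0 ∈ ℂ^d with support T0 = {j : (x0)_j ≠ 0}, let X0 = x0 x0*, w ∈ ℝ^m, b = 𝒜(X0) + w, and μ ≥ 0. Let X# be a Hermitian matrix with μ‖X#‖_1 + (1/2)‖𝒜(X#) − b‖_2² ≤ μ‖X0‖_1 + (1/2)‖𝒜(X0) − b‖_2², and set H = X# − X0. Then μ‖H − H_{T0,T0}‖_1 ≤ μ‖H_{T0,T0}‖_1 + ‖w‖_2·‖𝒜(H)‖_2 − (1/2)‖𝒜(H)‖_2², where H_{T0,T0} denotes the matrix that agrees with H on entries (i,j) with i ∈ T0 and j ∈ T0 and is zero elsewhere. -/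
open Matrix BigOperators
open scoped ComplexOrder

noncomputable section

/-! Compare the objective at `X#` and at `X₀ = x₀x₀*`. Since `X₀` vanishes off `T₀ × T₀`,
entrywise `‖X#‖₁ ≥ ‖X₀‖₁ - ‖H_{T₀,T₀}‖₁ + ‖H - H_{T₀,T₀}‖₁`. The residuals are `𝒜(H) - w` at `X#`
and `-w` at `X₀`, and the reverse triangle inequality `‖𝒜(H) - w‖₂ ≥ |‖𝒜(H)‖₂ - ‖w‖₂|` turns
`½‖w‖₂² - ½‖𝒜(H) - w‖₂²` into at most `‖w‖₂‖𝒜(H)‖₂ - ½‖𝒜(H)‖₂²`. -/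

lemma calA_add {d m : ℕ} (a : Fin m → Fin d → ℂ) (X Y : Matrix (Fin d) (Fin d) ℂ) :
    calA a (X + Y) = calA a X + calA a Y := by
  ext i
  simp [calA, add_mulVec, dotProduct_add]

lemma l2_eq_norm_toLp {m : ℕ} (v : Fin m → ℝ) :
    l2 v = ‖(WithLp.toLp 2 v : EuclideanSpace ℝ (Fin m))‖ := by
  simp [l2, EuclideanSpace.norm_eq]

lemma l2_neg {m : ℕ} (v : Fin m → ℝ) : l2 (-v) = l2 v := by
  simp [l2]

lemma sq_l2_sub_l2_le {m : ℕ} (v w : Fin m → ℝ) : (l2 v - l2 w) ^ 2 ≤ l2 (v - w) ^ 2 := by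
  simp only [l2_eq_norm_toLp, WithLp.toLp_sub, ← sq_abs (‖_‖ - ‖_‖)]
  exact pow_le_pow_left₀ (abs_nonneg _) (abs_norm_sub_norm_le _ _) 2

lemma vecMulVec_star_apply_eq_zero {d : ℕ} {x : Fin d → ℂ} {i j : Fin d}
    (h : ¬(x i ≠ 0 ∧ x j ≠ 0)) : vecMulVec x (star x) i j = 0 := by
  rw [vecMulVec_apply]
  rcases not_and_or.mp h with h | h <;> simp_all

lemma matL1_add_matL1_sub_restrict_le {d : ℕ} (S : Fin d → Fin d → Prop) [DecidableRel S]
    (X₀ H H_S : Matrix (Fin d) (Fin d) ℂ) (hX₀ : ∀ i j, ¬S i j → X₀ i j = 0)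
    (hH_S : ∀ i j, H_S i j = if S i j then H i j else 0) :
    matL1 X₀ + matL1 (H - H_S) ≤ matL1 (X₀ + H) + matL1 H_S := by
  simp only [matL1, ← Finset.sum_add_distrib]
  refine Finset.sum_le_sum fun i _ => Finset.sum_le_sum fun j _ => ?_
  simp only [Matrix.sub_apply, Matrix.add_apply, hH_S]
  split_ifs with hS
  · simpa [add_comm] using norm_le_insert' (X₀ i j) (-H i j)
  · simp [hX₀ i j hS]

theorem cone_constraint_inequality_general {d m : ℕ} (a : Fin m → Fin d → ℂ)
    (x0 : Fin d → ℂ) (w b : Fin m → ℝ)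
    (hb : ∀ i, b i = calA a (vecMulVec x0 (star x0)) i + w i)
    (mu : ℝ) (hmu : 0 ≤ mu)
    (Xs : Matrix (Fin d) (Fin d) ℂ)
    (hle : mu * matL1 Xs + (1/2) * (l2 (fun i => calA a Xs i - b i)) ^ 2 ≤
        mu * matL1 (vecMulVec x0 (star x0))
          + (1/2) * (l2 (fun i => calA a (vecMulVec x0 (star x0)) i - b i)) ^ 2)
    (H : Matrix (Fin d) (Fin d) ℂ) (hH : H = Xs - vecMulVec x0 (star x0))
    (HT : Matrix (Fin d) (Fin d) ℂ)
    (hHT : ∀ i j, HT i j = if x0 i ≠ 0 ∧ x0 j ≠ 0 then H i j else 0) :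
    mu * matL1 (H - HT) ≤
      mu * matL1 HT + l2 w * l2 (calA a H) - (1/2) * (l2 (calA a H)) ^ 2 := by
  set X0 := vecMulVec x0 (star x0)
  have hXs : Xs = X0 + H := by rw [hH]; abel
  have hres_Xs : (fun i => calA a Xs i - b i) = calA a H - w := by
    ext i; simp [hXs, calA_add, hb]
  have hres_X0 : (fun i => calA a X0 i - b i) = -w := by
    ext i; simp [hb]
  rw [hres_Xs, hres_X0, l2_neg] at hle
  have hL1 := matL1_add_matL1_sub_restrict_le (fun i j => x0 i ≠ 0 ∧ x0 j ≠ 0) X0 H HT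
    (fun i j => vecMulVec_star_apply_eq_zero) hHT
  rw [← hXs] at hL1
  nlinarith [mul_le_mul_of_nonneg_left hL1 hmu, sq_l2_sub_l2_le (calA a H) w]

/-- Inequality (3.1): μ‖H − H_{T₀,T₀}‖₁ ≤ μ‖H_{T₀,T₀}‖₁ + ‖w‖₂‖𝒜(H)‖₂ − (1/2)‖𝒜(H)‖₂². -/
theorem cone_constraint_inequality {d m : ℕ} (a : Fin m → Fin d → ℂ)
    (x0 : Fin d → ℂ) (w b : Fin m → ℝ)
    (hb : ∀ i, b i = calA a (vecMulVec x0 (star x0)) i + w i)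
    (mu : ℝ) (hmu : 0 ≤ mu)
    (Xs : Matrix (Fin d) (Fin d) ℂ) (hXs : Xs.IsHermitian)
    (hle : mu * matL1 Xs + (1/2) * (l2 (fun i => calA a Xs i - b i)) ^ 2 ≤
        mu * matL1 (vecMulVec x0 (star x0))
          + (1/2) * (l2 (fun i => calA a (vecMulVec x0 (star x0)) i - b i)) ^ 2)
    (H : Matrix (Fin d) (Fin d) ℂ) (hH : H = Xs - vecMulVec x0 (star x0))
    (HT : Matrix (Fin d) (Fin d) ℂ)
    (hHT : ∀ i j, HT i j = if x0 i ≠ 0 ∧ x0 j ≠ 0 then H i j else 0) :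
    mu * matL1 (H - HT) ≤
      mu * matL1 HT + l2 w * l2 (calA a H) - (1/2) * (l2 (calA a H)) ^ 2 :=
  cone_constraint_inequality_general a x0 w b hb mu hmu Xs hle H hH HT hHT
end
end
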